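/- For every invertible endomorphism g of a finite-dimensional real vector space V there exist unique commuting elements e, h, u ∈ GL(V) with g = ehu, where e is semisimple with all complex eigenvalues of absolute value one, h is semisimple with all eigenvalues positive real, and u is unipotent. -/

import Mathlib

open TensorProduct

/-- An endomorphism of a vector space over `K` is diagonalizable if its eigenspaces span. -/
def IsDiag {K M : Type*} [Field K] [AddCommGroup M] [Module K M]
    (f : Module.End K M) : Prop :=
  (⨆ μ : K, f.eigenspace μ) = ⊤

/-- The complexification of a real endomorphism, acting on `ℂ ⊗[ℝ] V`. -/
noncomputable def cplx {V : Type*} [AddCommGroup V] [Module ℝ V]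
    (X : Module.End ℝ V) : Module.End ℂ (ℂ ⊗[ℝ] V) :=
  LinearMap.baseChange ℂ X

/-- `X` is (additively) elliptic: semisimple with purely imaginary eigenvalues. -/
noncomputable def IsElliptic {V : Type*} [AddCommGroup V] [Module ℝ V]
    (X : Module.End ℝ V) : Prop :=
  IsDiag (cplx X) ∧ ∀ μ : ℂ, (cplx X).HasEigenvalue μ → μ.re = 0

/-- `X` is (additively) hyperbolic: semisimple with real eigenvalues. -/
noncomputable def IsHyperbolic {V : Type*} [AddCommGroup V] [Module ℝ V]
    (X : Module.End ℝ V) : Prop :=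
  IsDiag (cplx X) ∧ ∀ μ : ℂ, (cplx X).HasEigenvalue μ → μ.im = 0

/-- `g` is (multiplicatively) elliptic: semisimple with eigenvalues of absolute value one. -/
noncomputable def IsMultElliptic {V : Type*} [AddCommGroup V] [Module ℝ V]
    (g : Module.End ℝ V) : Prop :=
  IsDiag (cplx g) ∧ ∀ μ : ℂ, (cplx g).HasEigenvalue μ → ‖μ‖ = 1

/-- `g` is (multiplicatively) hyperbolic: semisimple with positive real eigenvalues. -/
noncomputable def IsMultHyperbolic {V : Type*} [AddCommGroup V] [Module ℝ V]
    (g : Module.End ℝ V) : Prop :=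
  IsDiag (cplx g) ∧ ∀ μ : ℂ, (cplx g).HasEigenvalue μ → μ.im = 0 ∧ 0 < μ.re

/-!
Jordan–Chevalley gives `g = s + n` with `s` semisimple, `n` nilpotent, both polynomials in `g`;
then `g = s u` with `u = 1 + s⁻¹ n` unipotent. The semisimple part splits as `s = E(s) H(s)`,
where the real polynomials `E`, `H` interpolate `μ ↦ μ / |μ|` and `μ ↦ |μ|` on the spectrum of
`s`: both functions commute with complex conjugation, so the interpolants can be taken real.

For uniqueness, if `g = e h u'` then `e h` is semisimple after complexification, so uniqueness of
the Jordan–Chevalley decomposition gives `e h = s` and `u' = u`. On a joint eigenvector of the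
commuting semisimple maps `e`, `h`, with eigenvalues `α`, `β`, we have `|α β| = β`, so `h` acts
there as `H(s)` does; joint eigenvectors span, hence `h = H(s)` and then `e = E(s)`.
-/

open Polynomial Module End

section IsDiag

variable {K V : Type*} [Field K] [AddCommGroup V] [Module K V] {f : End K V}

lemma IsDiag.ext (hf : IsDiag f) {F G : End K V}
    (h : ∀ (μ : K) x, f x = μ • x → F x = G x) : F = G := by
  suffices ⊤ ≤ LinearMap.eqLocus F G from LinearMap.ext fun x ↦ this trivial
  rw [← hf]
  exact iSup_le fun μ x hx ↦ h μ x (mem_eigenspace_iff.mp hx)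

lemma IsDiag.aeval_eq_zero (hf : IsDiag f) {p : K[X]}
    (hp : ∀ μ, f.HasEigenvalue μ → p.IsRoot μ) : aeval f p = 0 := by
  refine hf.ext fun μ x hx ↦ ?_
  rcases eq_or_ne x 0 with rfl | hx0
  · simp
  have hμ : f.HasEigenvector μ x := ⟨mem_eigenspace_iff.mpr hx, hx0⟩
  rw [aeval_apply_of_hasEigenvector hμ, (hp μ (hasEigenvalue_of_hasEigenvector hμ)).eq_zero,
    zero_smul, LinearMap.zero_apply]

lemma IsDiag.isSemisimple [FiniteDimensional K V] (hf : IsDiag f) : f.IsSemisimple := by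
  let Λ := f.finite_hasEigenvalue.toFinset
  refine isSemisimple_of_squarefree_aeval_eq_zero (p := ∏ μ ∈ Λ, (X - C μ))
    (separable_prod_X_sub_C_iff'.mpr fun _ _ _ _ ↦ id).squarefree (hf.aeval_eq_zero fun μ hμ ↦ ?_)
  rw [IsRoot, eval_prod]
  exact Finset.prod_eq_zero (f.finite_hasEigenvalue.mem_toFinset.mpr hμ) (by simp)

lemma isDiag_iff_isSemisimple [IsAlgClosed K] [FiniteDimensional K V] :
    IsDiag f ↔ f.IsSemisimple :=
  ⟨IsDiag.isSemisimple, IsSemisimple.iSup_eigenspace_eq_top⟩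

lemma Module.End.HasEigenvalue.ne_zero_of_isUnit [FiniteDimensional K V] (hf : IsUnit f) {μ : K}
    (hμ : f.HasEigenvalue μ) : μ ≠ 0 := by
  rintro rfl
  exact spectrum.zero_notMem_iff K |>.mpr hf (hasEigenvalue_iff_mem_spectrum.mp hμ)

end IsDiag

section AlgClosed

variable {K V : Type*} [Field K] [IsAlgClosed K] [AddCommGroup V] [Module K V]
  [FiniteDimensional K V]

lemma Module.End.HasEigenvalue.exists_of_aeval {f : End K V} {p : K[X]} {ν : K}
    (h : (aeval f p).HasEigenvalue ν) : ∃ μ, f.HasEigenvalue μ ∧ p.eval μ = ν := by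
  obtain ⟨x, hx⟩ := h.exists_hasEigenvector
  have : Nontrivial V := ⟨⟨x, 0, hx.2⟩⟩
  obtain ⟨μ₀, hμ₀⟩ := f.exists_eigenvalue
  simp_rw [hasEigenvalue_iff_mem_spectrum] at h hμ₀ ⊢
  rwa [spectrum.map_polynomial_aeval_of_nonempty f p ⟨μ₀, hμ₀⟩] at h

lemma Module.End.ext_of_commute_of_isSemisimple {A B F G : End K V} (hAB : Commute A B)
    (hA : A.IsSemisimple) (hB : B.IsSemisimple)
    (h : ∀ (α β : K) x, A x = α • x → B x = β • x → F x = G x) : F = G := by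
  let f : Bool → End K V := fun b ↦ cond b A B
  have hf : ∀ b, (f b).IsSemisimple := by rintro (_ | _) <;> assumption
  have htop := iSup_iInf_maxGenEigenspace_eq_top_of_iSup_maxGenEigenspace_eq_top_of_commute f
    (by rintro (_ | _) (_ | _) hne <;> first | exact absurd rfl hne | exact hAB | exact hAB.symm)
    (fun b ↦ iSup_maxGenEigenspace_eq_top (f b))
  simp_rw [fun b ↦ (hf b).isFinitelySemisimple.maxGenEigenspace_eq_eigenspace] at htop
  suffices ⊤ ≤ LinearMap.eqLocus F G from LinearMap.ext fun x ↦ this trivial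
  rw [← htop]
  refine iSup_le fun χ x hx ↦ ?_
  have hx := Submodule.mem_iInf _ |>.mp hx
  exact h (χ true) (χ false) x (mem_eigenspace_iff.mp (hx true)) (mem_eigenspace_iff.mp (hx false))

end AlgClosed

open ComplexConjugate in
lemma exists_real_polynomial_eval_eq (F : Finset ℂ) (f : ℂ → ℂ)
    (hf : ∀ z, f (conj z) = conj (f z)) :
    ∃ P : ℝ[X], ∀ z ∈ F, (P.map (algebraMap ℝ ℂ)).eval z = f z := by
  classical
  let q := Lagrange.interpolate (F ∪ F.image conj) id f
  have hq : ∀ z ∈ F ∪ F.image conj, q.eval z = f z := fun z hz ↦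
    Lagrange.eval_interpolate_at_node f (Set.injOn_id _) hz
  -- averaging `q` with its conjugate gives real coefficients and keeps the values on `F`
  let Q := C (1 / 2 : ℂ) * (q + q.map conj)
  have hQ : Q ∈ lifts (algebraMap ℝ ℂ) := by
    refine (lifts_iff_coeff_lifts Q).mpr fun n ↦ ⟨(q.coeff n).re, ?_⟩
    simp [Q, Complex.add_conj]
  obtain ⟨P, hP⟩ := (mem_lifts Q).mp hQ
  refine ⟨P, fun z hz ↦ ?_⟩
  have hz' : conj z ∈ F ∪ F.image conj := Finset.mem_union_right _ (Finset.mem_image_of_mem _ hz)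
  have hconj : (q.map conj).eval z = conj (q.eval (conj z)) := by
    rw [eval_map, ← eval₂_at_apply, Complex.conj_conj]
  rw [hP, eval_mul, eval_C, eval_add, hconj, hq z (Finset.mem_union_left _ hz), hq _ hz', hf,
    Complex.conj_conj]
  ring

section Complexification

variable {V : Type*} [AddCommGroup V] [Module ℝ V]

lemma cplx_injective : Function.Injective (cplx : End ℝ V → End ℂ (ℂ ⊗[ℝ] V)) :=
  LinearMap.baseChangeHom_injective ℝ V ℂ

lemma cplx_mul (f g : End ℝ V) : cplx (f * g) = cplx f * cplx g :=
  map_mul (End.baseChangeHom ℝ ℂ V) f g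

lemma cplx_aeval (f : End ℝ V) (P : ℝ[X]) :
    cplx (aeval f P) = aeval (cplx f) (P.map (algebraMap ℝ ℂ)) := by
  rw [aeval_map_algebraMap]
  exact (aeval_algHom_apply (End.baseChangeHom ℝ ℂ V) f P).symm

lemma Module.End.IsSemisimple.isDiag_cplx [FiniteDimensional ℝ V] {f : End ℝ V}
    (hf : f.IsSemisimple) : IsDiag (cplx f) := by
  refine isDiag_iff_isSemisimple.mpr <| isSemisimple_of_squarefree_aeval_eq_zero
    ((PerfectField.separable_iff_squarefree.mpr hf.minpoly_squarefree).map
      (f := algebraMap ℝ ℂ)).squarefree ?_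
  rw [← cplx_aeval, minpoly.aeval]
  exact map_zero (End.baseChangeHom ℝ ℂ V)

end Complexification

section MultiplicativeJordanChevalley

variable {K V : Type*} [Field K] [PerfectField K] [AddCommGroup V] [Module K V]
  [FiniteDimensional K V]

lemma Module.End.exists_isSemisimple_mul_unipotent {g : End K V} (hg : IsUnit g) :
    ∃ s u : End K V, s.IsSemisimple ∧ IsNilpotent (u - 1) ∧ Commute s u ∧ g = s * u := by
  obtain ⟨n, hn, s, hs, hn_nil, hs_ss, rfl⟩ := g.exists_isNilpotent_isSemisimple
  have hsn : Commute s n := Algebra.commute_of_mem_adjoin_singleton_of_commute hn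
    (Algebra.commute_of_mem_adjoin_self hs).symm
  obtain ⟨v, rfl⟩ : IsUnit s := by
    simpa using hn_nil.neg.isUnit_add_left_of_commute hg
      ((Commute.refl n).add_right hsn.symm).neg_left
  refine ⟨v, 1 + ↑v⁻¹ * n, hs_ss, ?_, ?_, ?_⟩
  · simpa using hsn.units_inv_left.isNilpotent_mul_left hn_nil
  · exact (Commute.one_right _).add_right ((Commute.refl _).units_inv_right.mul_right hsn)
  · rw [mul_add, mul_one, Units.mul_inv_cancel_left, add_comm]

lemma Module.End.isSemisimple_mul_unipotent_unique {s₁ u₁ s₂ u₂ : End K V}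
    (hs₁ : s₁.IsSemisimple) (hu₁ : IsNilpotent (u₁ - 1)) (hc₁ : Commute s₁ u₁)
    (hs₂ : s₂.IsSemisimple) (hu₂ : IsNilpotent (u₂ - 1)) (hc₂ : Commute s₂ u₂)
    (hunit : IsUnit (s₁ * u₁)) (h : s₁ * u₁ = s₂ * u₂) : s₁ = s₂ ∧ u₁ = u₂ := by
  -- `s * u = s * (u - 1) + s` is the additive Jordan-Chevalley decomposition
  have hadd : ∀ s u : End K V, s * u = s * (u - 1) + s := fun s u ↦ by noncomm_ring
  have hnil : ∀ {s u : End K V}, IsNilpotent (u - 1) → Commute s u →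
      IsNilpotent (s * (u - 1)) ∧ Commute (s * (u - 1)) s := fun {s _} hu hc ↦
    ⟨(hc.sub_right (Commute.one_right s)).isNilpotent_mul_left hu,
      (Commute.refl s).mul_left (hc.sub_right (Commute.one_right s)).symm⟩
  obtain ⟨-, rfl⟩ := isNilpotent_isSemisimple_unique (hnil hu₁ hc₁).1 hs₁ (hnil hu₂ hc₂).1 hs₂
    (hnil hu₁ hc₁).2 (hnil hu₂ hc₂).2 (by rw [← hadd, ← hadd, h])
  exact ⟨rfl, (hc₁.isUnit_mul_iff.mp hunit).1.mul_left_cancel h⟩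

end MultiplicativeJordanChevalley

lemma eq_aeval_mul_of_eval_eq_norm {W : Type*} [AddCommGroup W] [Module ℂ W]
    [FiniteDimensional ℂ W] {ε η : End ℂ W} (hc : Commute ε η) (hε : ε.IsSemisimple)
    (hη : η.IsSemisimple) (hε1 : ∀ α, ε.HasEigenvalue α → ‖α‖ = 1)
    (hη0 : ∀ β, η.HasEigenvalue β → β.im = 0 ∧ 0 < β.re) {Q : ℂ[X]}
    (hQ : ∀ μ, (ε * η).HasEigenvalue μ → Q.eval μ = ‖μ‖) :
    η = aeval (ε * η) Q := by
  refine ext_of_commute_of_isSemisimple hc hε hη fun α β x hα hβ ↦ ?_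
  rcases eq_or_ne x 0 with rfl | hx0
  · simp
  have hαβ : (ε * η).HasEigenvector (α * β) x := by
    refine ⟨mem_eigenspace_iff.mpr ?_, hx0⟩
    rw [mul_apply, hβ, map_smul, hα, smul_smul, mul_comm]
  obtain ⟨hβ_im, hβ_re⟩ := hη0 β (hasEigenvalue_of_hasEigenvector ⟨mem_eigenspace_iff.mpr hβ, hx0⟩)
  have hnorm : (‖α * β‖ : ℂ) = β := by
    rw [norm_mul, hε1 α (hasEigenvalue_of_hasEigenvector ⟨mem_eigenspace_iff.mpr hα, hx0⟩),
      one_mul, ← Complex.re_add_im β, hβ_im]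
    simp [hβ_re.le]
  rw [hβ, aeval_apply_of_hasEigenvector hαβ, hQ _ (hasEigenvalue_of_hasEigenvector hαβ), hnorm]

section Polar

variable {V : Type*} [AddCommGroup V] [Module ℝ V] [FiniteDimensional ℝ V]

lemma isSemisimple_cplx_mul {e h : End ℝ V} (hc : Commute e h) (he : IsDiag (cplx e))
    (hh : IsDiag (cplx h)) : (cplx (e * h)).IsSemisimple := by
  rw [cplx_mul]
  exact (isDiag_iff_isSemisimple.mp he).mul_of_commute (hc.map (End.baseChangeHom ℝ ℂ V))
    (isDiag_iff_isSemisimple.mp hh)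

lemma isSemisimple_cplx_mul_unipotent_unique {s₁ u₁ s₂ u₂ : End ℝ V}
    (hs₁ : (cplx s₁).IsSemisimple) (hu₁ : IsNilpotent (u₁ - 1)) (hc₁ : Commute s₁ u₁)
    (hs₂ : (cplx s₂).IsSemisimple) (hu₂ : IsNilpotent (u₂ - 1)) (hc₂ : Commute s₂ u₂)
    (hunit : IsUnit (s₁ * u₁)) (h : s₁ * u₁ = s₂ * u₂) : s₁ = s₂ ∧ u₁ = u₂ := by
  let φ := End.baseChangeHom ℝ ℂ V
  obtain ⟨hs, hu⟩ := isSemisimple_mul_unipotent_unique (s₁ := φ s₁) (u₁ := φ u₁) (s₂ := φ s₂)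
    (u₂ := φ u₂) hs₁ (by simpa using hu₁.map φ) (hc₁.map φ) hs₂ (by simpa using hu₂.map φ)
    (hc₂.map φ) (by simpa using hunit.map φ) (by simp only [← map_mul, h])
  exact ⟨cplx_injective hs, cplx_injective hu⟩

lemma exists_polar_decomposition {s : End ℝ V} (hs : s.IsSemisimple) (hs_unit : IsUnit s) :
    ∃ E H : ℝ[X], IsMultElliptic (aeval s E) ∧ IsMultHyperbolic (aeval s H) ∧
      aeval s E * aeval s H = s ∧
      ∀ μ, (cplx s).HasEigenvalue μ → (H.map (algebraMap ℝ ℂ)).eval μ = ‖μ‖ := by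
  let Λ := (cplx s).finite_hasEigenvalue.toFinset
  have hΛ : ∀ {μ}, (cplx s).HasEigenvalue μ → μ ∈ Λ := fun h ↦
    (cplx s).finite_hasEigenvalue.mem_toFinset.mpr h
  have hne : ∀ {μ}, (cplx s).HasEigenvalue μ → μ ≠ 0 :=
    HasEigenvalue.ne_zero_of_isUnit (hs_unit.map (End.baseChangeHom ℝ ℂ V))
  obtain ⟨E, hE⟩ := exists_real_polynomial_eval_eq Λ (fun z ↦ z / ‖z‖) (by simp)
  obtain ⟨H, hH⟩ := exists_real_polynomial_eval_eq Λ (fun z ↦ ‖z‖) (by simp)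
  have hev : ∀ (P : ℝ[X]) {ν}, (cplx (aeval s P)).HasEigenvalue ν →
      ∃ μ, (cplx s).HasEigenvalue μ ∧ (P.map (algebraMap ℝ ℂ)).eval μ = ν := fun P ν hν ↦ by
    rw [cplx_aeval] at hν
    exact hν.exists_of_aeval
  refine ⟨E, H, ⟨(hs.aeval E).isDiag_cplx, fun ν hν ↦ ?_⟩,
    ⟨(hs.aeval H).isDiag_cplx, fun ν hν ↦ ?_⟩, ?_, fun μ hμ ↦ hH μ (hΛ hμ)⟩
  · obtain ⟨μ, hμ, rfl⟩ := hev E hν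
    rw [hE μ (hΛ hμ), norm_div, Complex.norm_real, norm_norm,
      div_self (norm_ne_zero_iff.mpr (hne hμ))]
  · obtain ⟨μ, hμ, rfl⟩ := hev H hν
    simpa [hH μ (hΛ hμ)] using hne hμ
  · have hEH : aeval (cplx s) (E.map (algebraMap ℝ ℂ) * H.map (algebraMap ℝ ℂ) - X) = 0 := by
      refine hs.isDiag_cplx.aeval_eq_zero fun μ hμ ↦ ?_
      rw [IsRoot, eval_sub, eval_mul, hE μ (hΛ hμ), hH μ (hΛ hμ), eval_X, sub_eq_zero]
      exact div_mul_cancel₀ μ (by simpa using hne hμ)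
    refine cplx_injective ?_
    rw [cplx_mul, cplx_aeval, cplx_aeval, ← map_mul, ← sub_eq_zero]
    simpa using hEH

lemma eq_aeval_of_isMultElliptic_mul_isMultHyperbolic {s e h : End ℝ V} {H : ℝ[X]}
    (hH : ∀ μ, (cplx s).HasEigenvalue μ → (H.map (algebraMap ℝ ℂ)).eval μ = ‖μ‖)
    (hc : Commute e h) (he : IsMultElliptic e) (hh : IsMultHyperbolic h) (hs : e * h = s) :
    h = aeval s H := by
  refine cplx_injective ?_
  rw [cplx_aeval, ← hs, cplx_mul]
  refine eq_aeval_mul_of_eval_eq_norm (hc.map (End.baseChangeHom ℝ ℂ V))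
    (isDiag_iff_isSemisimple.mp he.1) (isDiag_iff_isSemisimple.mp hh.1) he.2 hh.2 fun μ hμ ↦ ?_
  rw [← map_mul, hs] at hμ
  exact hH μ hμ

end Polar

theorem multiplicative_jordan_decomposition
    {V : Type*} [AddCommGroup V] [Module ℝ V] [FiniteDimensional ℝ V]
    (g : Module.End ℝ V) (hg : IsUnit g) :
    ∃! d : Module.End ℝ V × Module.End ℝ V × Module.End ℝ V,
      IsUnit d.1 ∧ IsUnit d.2.1 ∧ IsUnit d.2.2 ∧
      Commute d.1 d.2.1 ∧ Commute d.1 d.2.2 ∧ Commute d.2.1 d.2.2 ∧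
      IsMultElliptic d.1 ∧ IsMultHyperbolic d.2.1 ∧ IsNilpotent (d.2.2 - 1) ∧
      g = d.1 * d.2.1 * d.2.2 := by
  obtain ⟨s, u, hs, hu, hsu, rfl⟩ := exists_isSemisimple_mul_unipotent hg
  obtain ⟨hs_unit, hu_unit⟩ := hsu.isUnit_mul_iff.mp hg
  obtain ⟨E, H, he, hh, heh, hH⟩ := exists_polar_decomposition hs hs_unit
  have hc : ∀ P : ℝ[X], Commute (aeval s P) u := fun P ↦ .symm <|
    Algebra.commute_of_mem_adjoin_singleton_of_commute (aeval_mem_adjoin_singleton ℝ s) hsu.symm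
  have hEH : Commute (aeval s E) (aeval s H) := (Commute.all E H).map (aeval s)
  obtain ⟨he_unit, hh_unit⟩ := hEH.isUnit_mul_iff.mp (by rwa [heh])
  refine ⟨(aeval s E, aeval s H, u),
    ⟨he_unit, hh_unit, hu_unit, hEH, hc E, hc H, he, hh, hu, by rw [heh]⟩, ?_⟩
  rintro ⟨e', h', u'⟩ ⟨-, -, -, heh', heu', hhu', he', hh', hu', hg'⟩
  obtain ⟨hs', rfl⟩ := isSemisimple_cplx_mul_unipotent_unique
    (isDiag_iff_isSemisimple.mp hs.isDiag_cplx) hu hsu (isSemisimple_cplx_mul heh' he'.1 hh'.1)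
    hu' (heu'.mul_left hhu') hg hg'
  obtain rfl := eq_aeval_of_isMultElliptic_mul_isMultHyperbolic hH heh' he' hh' hs'.symm
  obtain rfl := hh_unit.mul_right_cancel (hs'.symm.trans heh.symm)
  rfl
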